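/- (Corollary to Theorem B.1, Trotterized form) For all real a, ε, μ, μ', τ₀, b, φ₀, all integers j and k, every natural number M, all real step sizes c₁,…,c_M, and all real times τ₁,…,τ_M, the ordered product of matrix exponentials defining the Trotterized propagator satisfies ∏_{m=1}^{M} exp(−i c_m · h(b + 2πj/N, φ₀ + 2πk/N, τ_m)) = Z^{j} X^{k} · ( ∏_{m=1}^{M} exp(−i c_m · h(b, φ₀, τ_m)) ) · X^{−k} Z^{−j}, where both products are taken in the same fixed order. -/

import Mathlib

/-!
Clock and shift satisfy `Z X = ω X Z` and are unitary, so conjugation by `Z ^ j X ^ k` is a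
⋆-algebra automorphism multiplying `X` by `ω ^ j` and `Z` by `ω ^ (-k)`. The Hamiltonian depends
on `b` and `φ₀` only through the hopping term `e^{ib} X`, the on-site term `e^{-iφ₀} Z` and their
adjoints, and `e^{i(b + 2πj/N)} = ω ^ j e^{ib}`; hence the automorphism maps `h(b, φ₀, τ)` to
`h(b + 2πj/N, φ₀ + 2πk/N, τ)`. It commutes with the matrix exponential and with ordered products,
hence with the Trotter product.
-/

open Matrix Complex

noncomputable section

/-- `ω = exp(2πi/N)`. -/
def omegaN (N : ℕ) : ℂ := Complex.exp (2 * Real.pi * Complex.I / N)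

/-- The shift matrix `X` with entries `X j k = 1` iff `j ≡ k+1 (mod N)`. -/
def shiftX (N : ℕ) : Matrix (Fin N) (Fin N) ℂ :=
  Matrix.of fun j k => if (j : ℕ) = ((k : ℕ) + 1) % N then 1 else 0

/-- The clock matrix `Z = diag(ω^j)`. -/
def clockZ (N : ℕ) : Matrix (Fin N) (Fin N) ℂ :=
  Matrix.diagonal fun j => omegaN N ^ (j : ℕ)

/-- The unperturbed Harper Hamiltonian in clock-and-shift form:
`h₀(b,φ₀) = a·I − (a/2)(e^{ib} X + e^{−ib} X†) − (ε/2)(e^{−iφ₀} Z + e^{iφ₀} Z†)`. -/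
def harperH0 (N : ℕ) (a ε b φ₀ : ℝ) : Matrix (Fin N) (Fin N) ℂ :=
  (a : ℂ) • (1 : Matrix (Fin N) (Fin N) ℂ)
    - ((a : ℂ) / 2) • (Complex.exp (Complex.I * b) • shiftX N
        + Complex.exp (-(Complex.I * b)) • (shiftX N)ᴴ)
    - ((ε : ℂ) / 2) • (Complex.exp (-(Complex.I * φ₀)) • clockZ N
        + Complex.exp (Complex.I * φ₀) • (clockZ N)ᴴ)

/-- The time-dependent perturbation in clock-and-shift form:
`h₁(φ₀,τ) = −((μ+μ~)/2)(e^{−iφ₀} Z + e^{iφ₀} Z†)·cos(τ−τ₀)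
          + ((μ~−μ)/(2i))(e^{−iφ₀} Z − e^{iφ₀} Z†)·sin(τ−τ₀)`. -/
def harperH1 (N : ℕ) (μ μ2 τ₀ φ₀ τ : ℝ) : Matrix (Fin N) (Fin N) ℂ :=
  (-((((μ : ℂ) + μ2) / 2) * (Real.cos (τ - τ₀) : ℂ))) •
      (Complex.exp (-(Complex.I * φ₀)) • clockZ N
        + Complex.exp (Complex.I * φ₀) • (clockZ N)ᴴ)
    + (((((μ2 : ℂ) - μ) / (2 * Complex.I))) * (Real.sin (τ - τ₀) : ℂ)) •
      (Complex.exp (-(Complex.I * φ₀)) • clockZ N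
        - Complex.exp (Complex.I * φ₀) • (clockZ N)ᴴ)

/-- The full time-dependent Hamiltonian of the periodically perturbed Harper model. -/
def harperH (N : ℕ) (a ε μ μ2 τ₀ b φ₀ τ : ℝ) : Matrix (Fin N) (Fin N) ℂ :=
  harperH0 N a ε b φ₀ + harperH1 N μ μ2 τ₀ φ₀ τ

namespace Matrix

variable {n α : Type*} [Fintype n] [DecidableEq n]

theorem diagonal_mem_unitary [CommRing α] [StarRing α] {d : n → α} (hd : ∀ i, d i ∈ unitary α) :
    diagonal d ∈ unitary (Matrix n n α) := by
  have hstar : star d * d = 1 := funext fun i => Unitary.star_mul_self_of_mem (hd i)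
  refine mem_unitaryGroup_iff'.2 ?_
  rw [star_eq_conjTranspose, diagonal_conjTranspose, diagonal_mul_diagonal]
  exact (congrArg diagonal hstar).trans diagonal_one

theorem permMatrix_mem_unitary [CommRing α] [StarRing α] (σ : Equiv.Perm n) :
    σ.permMatrix α ∈ unitary (Matrix n n α) := by
  refine mem_unitaryGroup_iff'.2 ?_
  rw [star_eq_conjTranspose, conjTranspose_permMatrix, ← PEquiv.toMatrix_trans,
    ← Equiv.toPEquiv_trans, Equiv.Perm.inv_def, Equiv.symm_trans_self, Equiv.toPEquiv_refl,
    PEquiv.toMatrix_refl]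

theorem coe_unitary_zpow [CommRing α] [StarRing α] (u : unitary (Matrix n n α)) (z : ℤ) :
    ((u ^ z : unitary (Matrix n n α)) : Matrix n n α) = (u : Matrix n n α) ^ z := by
  rw [← Unitary.val_toUnits_apply, map_zpow, coe_units_zpow, Unitary.val_toUnits_apply]

theorem conjStarAlgAut_exp {S 𝔸 : Type*} [CommSemiring S] [NormedRing 𝔸] [NormedAlgebra ℚ 𝔸]
    [CompleteSpace 𝔸] [StarRing 𝔸] [Algebra S 𝔸] (u : unitary (Matrix n n 𝔸))
    (A : Matrix n n 𝔸) :
    Unitary.conjStarAlgAut S _ u (NormedSpace.exp A)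
      = NormedSpace.exp (Unitary.conjStarAlgAut S _ u A) := by
  have h := exp_units_conj (Unitary.toUnits u) A
  rw [Unitary.val_toUnits_apply, ← map_inv, Unitary.val_toUnits_apply, ← Unitary.star_eq_inv,
    Unitary.coe_star] at h
  rw [Unitary.conjStarAlgAut_apply, Unitary.conjStarAlgAut_apply, h]

end Matrix

theorem Unitary.conjStarAlgAut_apply_self {S R : Type*} [Semiring R] [StarMul R] [SMul S R]
    [IsScalarTower S R R] [SMulCommClass S R R] (u : unitary R) :
    Unitary.conjStarAlgAut S R u u = u := by
  rw [Unitary.conjStarAlgAut_apply, mul_assoc, Unitary.mul_star_self_of_mem u.prop, mul_one]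

theorem StarAlgEquiv.zpow_apply_of_apply_eq_smul {S R : Type*} [Semifield S] [Semiring R] [Star R]
    [Module S R] {f : R ≃⋆ₐ[S] R} {x : R} {c : S} (hc : c ≠ 0) (h : f x = c • x) (m : ℤ) :
    (f ^ m) x = c ^ m • x := by
  have hinv : f⁻¹ x = c⁻¹ • x := by
    rw [StarAlgEquiv.aut_inv, StarAlgEquiv.symm_apply_eq, map_smul, h, inv_smul_smul₀ hc]
  induction m using Int.induction_on with
  | zero => simp
  | succ i ih =>
    rw [_root_.zpow_add_one, StarAlgEquiv.mul_apply, h, map_smul, ih, smul_smul,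
      zpow_add_one₀ hc, mul_comm]
  | pred i ih =>
    rw [_root_.zpow_sub_one, StarAlgEquiv.mul_apply, hinv, map_smul, ih, smul_smul,
      zpow_sub_one₀ hc, mul_comm]

theorem omegaN_ne_zero (N : ℕ) : omegaN N ≠ 0 := Complex.exp_ne_zero _

theorem omegaN_pow_self (N : ℕ) : omegaN N ^ N = 1 := by
  rcases N.eq_zero_or_pos with rfl | hN
  · exact pow_zero _
  · exact (Complex.isPrimitiveRoot_exp N hN.ne').pow_eq_one

theorem omegaN_mem_unitary (N : ℕ) : omegaN N ∈ unitary ℂ := by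
  rw [Unitary.mem_iff_star_mul_self, omegaN, Complex.star_def, ← Complex.exp_conj,
    ← Complex.exp_add]
  simp [Complex.conj_ofReal, map_div₀, map_ofNat, neg_div]

theorem omegaN_pow_finRotate {N : ℕ} (i : Fin N) :
    omegaN N ^ (finRotate N i : ℕ) = omegaN N * omegaN N ^ (i : ℕ) := by
  obtain ⟨n, rfl⟩ : ∃ n, N = n + 1 := Nat.exists_eq_add_one.2 i.pos
  rw [← pow_succ', coe_finRotate]
  split_ifs with h
  · rw [h, Fin.val_last, pow_zero, omegaN_pow_self]
  · rfl

theorem exp_I_mul_add_two_pi_div (N : ℕ) (t : ℝ) (m : ℤ) :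
    Complex.exp (Complex.I * ((t + 2 * Real.pi * m / N : ℝ) : ℂ))
      = omegaN N ^ m * Complex.exp (Complex.I * t) := by
  rw [omegaN, ← Complex.exp_int_mul, ← Complex.exp_add]
  push_cast
  ring_nf

theorem exp_neg_I_mul_add_two_pi_div (N : ℕ) (t : ℝ) (m : ℤ) :
    Complex.exp (-(Complex.I * ((t + 2 * Real.pi * m / N : ℝ) : ℂ)))
      = omegaN N ^ (-m) * Complex.exp (-(Complex.I * t)) := by
  rw [Complex.exp_neg, Complex.exp_neg, exp_I_mul_add_two_pi_div, mul_inv, _root_.zpow_neg]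

theorem shiftX_eq_permMatrix (N : ℕ) :
    shiftX N = Equiv.Perm.permMatrix ℂ (finRotate N).symm := by
  ext j k
  have := j.neZero
  simp only [shiftX, Matrix.of_apply, PEquiv.toMatrix_apply, Equiv.toPEquiv_apply,
    Option.mem_def, Option.some_inj, Equiv.symm_apply_eq, finRotate_apply, Fin.ext_iff,
    Fin.val_add, Fin.val_one', Nat.add_mod_mod]

theorem clockZ_mem_unitary (N : ℕ) : clockZ N ∈ unitary (Matrix (Fin N) (Fin N) ℂ) :=
  Matrix.diagonal_mem_unitary fun _ => pow_mem (omegaN_mem_unitary N) _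

theorem shiftX_mem_unitary (N : ℕ) : shiftX N ∈ unitary (Matrix (Fin N) (Fin N) ℂ) :=
  shiftX_eq_permMatrix N ▸ Matrix.permMatrix_mem_unitary _

theorem clockZ_mul_shiftX (N : ℕ) :
    clockZ N * shiftX N = omegaN N • (shiftX N * clockZ N) := by
  ext j k
  simp only [clockZ, shiftX_eq_permMatrix, Matrix.diagonal_mul, Matrix.mul_diagonal,
    Matrix.smul_apply, smul_eq_mul, PEquiv.toMatrix_apply, Equiv.toPEquiv_apply,
    Option.mem_def, Option.some.injEq, Equiv.symm_apply_eq]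
  split_ifs with h
  · rw [h, omegaN_pow_finRotate]; ring
  · simp

def clockU (N : ℕ) : unitary (Matrix (Fin N) (Fin N) ℂ) := ⟨clockZ N, clockZ_mem_unitary N⟩

def shiftU (N : ℕ) : unitary (Matrix (Fin N) (Fin N) ℂ) := ⟨shiftX N, shiftX_mem_unitary N⟩

def clockShiftConj (N : ℕ) (j k : ℤ) :
    Matrix (Fin N) (Fin N) ℂ ≃⋆ₐ[ℂ] Matrix (Fin N) (Fin N) ℂ :=
  Unitary.conjStarAlgAut ℂ _ (clockU N ^ j * shiftU N ^ k)

theorem clockShiftConj_apply (N : ℕ) (j k : ℤ) (A : Matrix (Fin N) (Fin N) ℂ) :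
    clockShiftConj N j k A
      = clockZ N ^ j * shiftX N ^ k * A * shiftX N ^ (-k) * clockZ N ^ (-j) := by
  rw [clockShiftConj, Unitary.conjStarAlgAut_apply, ← Unitary.coe_star, Unitary.star_eq_inv,
    _root_.mul_inv_rev, ← _root_.zpow_neg, ← _root_.zpow_neg]
  simp only [Submonoid.coe_mul, Matrix.coe_unitary_zpow, mul_assoc]
  rfl

theorem conjStarAlgAut_clockU_shiftX (N : ℕ) :
    Unitary.conjStarAlgAut ℂ _ (clockU N) (shiftX N) = omegaN N • shiftX N := by
  rw [Unitary.conjStarAlgAut_apply, clockU, clockZ_mul_shiftX, smul_mul_assoc, mul_assoc,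
    Unitary.mul_star_self_of_mem (clockZ_mem_unitary N), mul_one]

theorem conjStarAlgAut_shiftU_clockZ (N : ℕ) :
    Unitary.conjStarAlgAut ℂ _ (shiftU N) (clockZ N) = (omegaN N)⁻¹ • clockZ N := by
  have hXZ : shiftX N * clockZ N = (omegaN N)⁻¹ • (clockZ N * shiftX N) := by
    rw [clockZ_mul_shiftX, inv_smul_smul₀ (omegaN_ne_zero N)]
  rw [Unitary.conjStarAlgAut_apply, shiftU, hXZ, smul_mul_assoc, mul_assoc,
    Unitary.mul_star_self_of_mem (shiftX_mem_unitary N), mul_one]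

theorem clockShiftConj_shiftX (N : ℕ) (j k : ℤ) :
    clockShiftConj N j k (shiftX N) = omegaN N ^ j • shiftX N := by
  have hX : Unitary.conjStarAlgAut ℂ _ (shiftU N) (shiftX N) = (1 : ℂ) • shiftX N :=
    (Unitary.conjStarAlgAut_apply_self _).trans (one_smul _ _).symm
  rw [clockShiftConj, map_mul, map_zpow, map_zpow, StarAlgEquiv.mul_apply,
    StarAlgEquiv.zpow_apply_of_apply_eq_smul one_ne_zero hX, _root_.one_zpow, one_smul,
    StarAlgEquiv.zpow_apply_of_apply_eq_smul (omegaN_ne_zero N) (conjStarAlgAut_clockU_shiftX N)]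

theorem clockShiftConj_clockZ (N : ℕ) (j k : ℤ) :
    clockShiftConj N j k (clockZ N) = omegaN N ^ (-k) • clockZ N := by
  have hZ : Unitary.conjStarAlgAut ℂ _ (clockU N) (clockZ N) = (1 : ℂ) • clockZ N :=
    (Unitary.conjStarAlgAut_apply_self _).trans (one_smul _ _).symm
  rw [clockShiftConj, map_mul, map_zpow, map_zpow, StarAlgEquiv.mul_apply,
    StarAlgEquiv.zpow_apply_of_apply_eq_smul (inv_ne_zero (omegaN_ne_zero N))
      (conjStarAlgAut_shiftU_clockZ N), map_smul,
    StarAlgEquiv.zpow_apply_of_apply_eq_smul one_ne_zero hZ, _root_.one_zpow, one_smul,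
    _root_.inv_zpow']

def harperHopping (N : ℕ) (b : ℝ) : Matrix (Fin N) (Fin N) ℂ :=
  Complex.exp (Complex.I * b) • shiftX N

def harperOnsite (N : ℕ) (φ₀ : ℝ) : Matrix (Fin N) (Fin N) ℂ :=
  Complex.exp (-(Complex.I * φ₀)) • clockZ N

theorem harperH_eq (N : ℕ) (a ε μ μ2 τ₀ b φ₀ τ : ℝ) :
    harperH N a ε μ μ2 τ₀ b φ₀ τ =
      (a : ℂ) • 1 - ((a : ℂ) / 2) • (harperHopping N b + star (harperHopping N b))
        - ((ε : ℂ) / 2) • (harperOnsite N φ₀ + star (harperOnsite N φ₀))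
        + (-((((μ : ℂ) + μ2) / 2) * (Real.cos (τ - τ₀) : ℂ)))
            • (harperOnsite N φ₀ + star (harperOnsite N φ₀))
        + ((((μ2 : ℂ) - μ) / (2 * Complex.I)) * (Real.sin (τ - τ₀) : ℂ))
            • (harperOnsite N φ₀ - star (harperOnsite N φ₀)) := by
  simp only [harperH, harperH0, harperH1, harperHopping, harperOnsite, star_smul,
    Complex.star_def, ← Complex.exp_conj, map_neg, map_mul, Complex.conj_I, Complex.conj_ofReal,
    neg_mul, neg_neg, Matrix.star_eq_conjTranspose]
  abel

theorem map_harperH {N : ℕ} {F : Type*}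
    [FunLike F (Matrix (Fin N) (Fin N) ℂ) (Matrix (Fin N) (Fin N) ℂ)]
    [AlgHomClass F ℂ _ _] [StarHomClass F _ _] (φ : F) (a ε μ μ2 τ₀ τ : ℝ) {b b' φ₀ φ₀' : ℝ}
    (hb : φ (harperHopping N b) = harperHopping N b')
    (hφ₀ : φ (harperOnsite N φ₀) = harperOnsite N φ₀') :
    φ (harperH N a ε μ μ2 τ₀ b φ₀ τ) = harperH N a ε μ μ2 τ₀ b' φ₀' τ := by
  simp only [harperH_eq, map_add, map_sub, map_smul, map_star, map_one, hb, hφ₀]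

theorem clockShiftConj_harperH (N : ℕ) (a ε μ μ2 τ₀ b φ₀ τ : ℝ) (j k : ℤ) :
    clockShiftConj N j k (harperH N a ε μ μ2 τ₀ b φ₀ τ)
      = harperH N a ε μ μ2 τ₀ (b + 2 * Real.pi * j / N) (φ₀ + 2 * Real.pi * k / N) τ := by
  refine map_harperH _ a ε μ μ2 τ₀ τ ?_ ?_
  · rw [harperHopping, harperHopping, map_smul, clockShiftConj_shiftX, smul_smul,
      exp_I_mul_add_two_pi_div, mul_comm]
  · rw [harperOnsite, harperOnsite, map_smul, clockShiftConj_clockZ, smul_smul,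
      exp_neg_I_mul_add_two_pi_div, mul_comm]

theorem trotter_propagator_shift_conj_general (N : ℕ)
    (a ε μ μ2 τ₀ b φ₀ : ℝ) (j k : ℤ) (M : ℕ) (c τs : Fin M → ℝ) :
    (List.ofFn fun m : Fin M =>
        NormedSpace.exp ((-(Complex.I * (c m : ℂ))) •
          harperH N a ε μ μ2 τ₀ (b + 2 * Real.pi * j / N)
            (φ₀ + 2 * Real.pi * k / N) (τs m))).prod
      = clockZ N ^ j * shiftX N ^ k *
          (List.ofFn fun m : Fin M =>
            NormedSpace.exp ((-(Complex.I * (c m : ℂ))) •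
              harperH N a ε μ μ2 τ₀ b φ₀ (τs m))).prod
          * shiftX N ^ (-k) * clockZ N ^ (-j) := by
  have hstep : ∀ m : Fin M,
      NormedSpace.exp ((-(Complex.I * (c m : ℂ))) •
          harperH N a ε μ μ2 τ₀ (b + 2 * Real.pi * j / N) (φ₀ + 2 * Real.pi * k / N) (τs m))
        = clockShiftConj N j k
            (NormedSpace.exp ((-(Complex.I * (c m : ℂ))) • harperH N a ε μ μ2 τ₀ b φ₀ (τs m))) := by
    intro m
    rw [← clockShiftConj_harperH, ← map_smul]
    exact (Matrix.conjStarAlgAut_exp _ _).symm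
  simp_rw [hstep]
  rw [← clockShiftConj_apply, map_list_prod, List.map_ofFn, Function.comp_def]

/-- (Corollary to Theorem B.1, Trotterized form) The ordered product of matrix
exponentials defining the Trotterized propagator with shifted angle parameters equals
the conjugation by clock and shift operators of the unshifted ordered product. -/
theorem trotter_propagator_shift_conj (N : ℕ) (hN : 0 < N)
    (a ε μ μ2 τ₀ b φ₀ : ℝ) (j k : ℤ) (M : ℕ) (c τs : Fin M → ℝ) :
    (List.ofFn fun m : Fin M =>
        NormedSpace.exp ((-(Complex.I * (c m : ℂ))) •
          harperH N a ε μ μ2 τ₀ (b + 2 * Real.pi * j / N)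
            (φ₀ + 2 * Real.pi * k / N) (τs m))).prod
      = clockZ N ^ j * shiftX N ^ k *
          (List.ofFn fun m : Fin M =>
            NormedSpace.exp ((-(Complex.I * (c m : ℂ))) •
              harperH N a ε μ μ2 τ₀ b φ₀ (τs m))).prod
          * shiftX N ^ (-k) * clockZ N ^ (-j) :=
  trotter_propagator_shift_conj_general N a ε μ μ2 τ₀ b φ₀ j k M c τs
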